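/- Let K be a number field, let f : P^1 → P^1 be a rational map of degree d ≥ 2 defined over K, and let α ∈ P^1(K). If f is a Chebyshev map, i.e. f is PGL_2(K̄)-conjugate to T_d(x) or to −T_d(x) where T_d is the d-th Chebyshev polynomial, then the Minkowski dimension dim(G_{f,α}) exists and dim(G_{f,α}) = 0. -/

import Mathlib

open scoped Classical

noncomputable section

/-! ### Minkowski dimension machinery for groups of automorphisms of rooted trees

A rooted tree is presented by its levels `V 0, V 1, V 2, …` (with `V 0` the root level)
together with parent maps `V (n+1) → V n`.  An automorphism is a family of permutations
of the levels commuting with the parent maps; it is in particular determined by a point of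
`∀ k, Equiv.Perm (V k)`.  The restriction `r_n σ` of `σ` to the height-`n` subtree is the
tuple `(σ 0, …, σ n)`, and the natural metric is
`d(σ,τ) = inf { d!^{-(dⁿ-1)/(d-1)} : r_n σ = r_n τ }`. -/

/-- The exponent `(dⁿ - 1)/(d - 1) = 1 + d + ⋯ + d^(n-1)`. -/
def scaleExp (d n : ℕ) : ℕ := ∑ i ∈ Finset.range n, d ^ i

/-- The scale `ε_n = d!^{-(dⁿ-1)/(d-1)}`, i.e. `1/|Aut(Tₙᶜᵒᵐ)|`. -/
def treeScale (d n : ℕ) : ℝ := ((d.factorial : ℝ) ^ scaleExp d n)⁻¹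

/-- Two families of level permutations restrict to the same automorphism of the
height-`n` subtree. -/
def AgreeUpTo {V : ℕ → Type*} (n : ℕ) (σ τ : ∀ k, Equiv.Perm (V k)) : Prop :=
  ∀ k, k ≤ n → σ k = τ k

/-- The natural metric on automorphisms of a rooted `d`-ary tree:
`d(σ,τ) = inf { d!^{-(dⁿ-1)/(d-1)} : σ and τ agree on the height-n subtree }`. -/
def treeDist {V : ℕ → Type*} (d : ℕ) (σ τ : ∀ k, Equiv.Perm (V k)) : ℝ :=
  sInf {x : ℝ | ∃ n : ℕ, AgreeUpTo n σ τ ∧ x = treeScale d n}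

/-- `N_{ε_n}(G)`: the least number of balls of radius `ε_n = treeScale d n` needed to
cover `G`. -/
def coverNum {V : ℕ → Type*} (d : ℕ) (G : Set (∀ k, Equiv.Perm (V k))) (n : ℕ) : ℕ :=
  sInf {m : ℕ | ∃ s : Finset (∀ k, Equiv.Perm (V k)), s.card = m ∧
    G ⊆ ⋃ σ ∈ s, {τ | treeDist d σ τ ≤ treeScale d n}}

/-- The lower Minkowski dimension `liminf_{ε → 0} log N_ε(G) / log (1/ε)` (computed
along the scales `ε_n` of the metric). -/
def dimLower {V : ℕ → Type*} (d : ℕ) (G : Set (∀ k, Equiv.Perm (V k))) : ℝ :=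
  Filter.liminf
    (fun n : ℕ => Real.log (coverNum d G n : ℝ) / Real.log (1 / treeScale d n)) Filter.atTop

/-- The upper Minkowski dimension `limsup_{ε → 0} log N_ε(G) / log (1/ε)` (computed
along the scales `ε_n` of the metric). -/
def dimUpper {V : ℕ → Type*} (d : ℕ) (G : Set (∀ k, Equiv.Perm (V k))) : ℝ :=
  Filter.limsup
    (fun n : ℕ => Real.log (coverNum d G n : ℝ) / Real.log (1 / treeScale d n)) Filter.atTop

/-- The Minkowski dimension of `G` exists and equals `x`. -/
def HasDim {V : ℕ → Type*} (d : ℕ) (G : Set (∀ k, Equiv.Perm (V k))) (x : ℝ) : Prop :=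
  dimLower d G = x ∧ dimUpper d G = x

/-- `G` is closed for the natural metric. -/
def IsDistClosed {V : ℕ → Type*} (d : ℕ) (G : Set (∀ k, Equiv.Perm (V k))) : Prop :=
  ∀ σ, (∀ ε : ℝ, 0 < ε → ∃ τ ∈ G, treeDist d σ τ ≤ ε) → σ ∈ G

/-- The closure of `G` for the natural metric. -/
def distClosure {V : ℕ → Type*} (d : ℕ) (G : Set (∀ k, Equiv.Perm (V k))) :
    Set (∀ k, Equiv.Perm (V k)) :=
  {σ | ∀ ε : ℝ, 0 < ε → ∃ τ ∈ G, treeDist d σ τ ≤ ε}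

/-- `|r_n(G)|`: the cardinality of the restriction of `G` to the height-`n` subtree. -/
def levelCard {V : ℕ → Type*} (G : Set (∀ k, Equiv.Perm (V k))) (n : ℕ) : ℕ :=
  Nat.card ((fun (σ : ∀ k, Equiv.Perm (V k)) (k : Fin (n + 1)) => σ k.1) '' G)

end
noncomputable section

/-- A fixed algebraic closure `K̄` of `K`. -/
abbrev Kbar (K : Type*) [Field K] : Type _ := AlgebraicClosure K

/-- The level-`n` vertices of the preimage tree of `α` under `φ`: the set
`φ^{-n}(α)`. -/
abbrev preV {Pts : Type*} (φ : Pts → Pts) (α : Pts) (n : ℕ) : Type _ :=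
  {β : Pts // φ^[n] β = α}

/-- The parent map of the preimage tree: a vertex `β ∈ φ^{-(n+1)}(α)` is joined to
`φ(β) ∈ φ^{-n}(α)`. -/
def preParent {Pts : Type*} (φ : Pts → Pts) (α : Pts) (n : ℕ)
    (β : preV φ α (n + 1)) : preV φ α n :=
  ⟨φ β.1, by have h := β.2; rwa [Function.iterate_succ_apply] at h⟩

/-- The image `G_{φ,α}` of the arboreal Galois representation attached to `(φ, α)` over
the base field `L` (an intermediate field of `K̄/K`): the set of families of level
permutations of the preimage tree induced by elements of `Gal(K̄/L)`, acting on points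
via `act`. -/
def arbGal {K : Type*} [Field K] {Pts : Type*}
    (act : (Kbar K ≃ₐ[K] Kbar K) → Pts → Pts) (L : IntermediateField K (Kbar K))
    (φ : Pts → Pts) (α : Pts) : Set (∀ n, Equiv.Perm (preV φ α n)) :=
  {g | ∃ σ : Kbar K ≃ₐ[K] Kbar K, (∀ x ∈ L, σ x = x) ∧
    ∀ (n : ℕ) (β : preV φ α n), (g n β : Pts) = act σ (β : Pts)}

end
noncomputable section

/-- The projective line `ℙ¹(L) = L ∪ {∞}`, with `none` the point at infinity. -/
abbrev P1 (L : Type*) := Option L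

/-- The action on `ℙ¹(A)` of the rational map `f = p/q` with coefficients in `K`,
for an extension field `A` of `K`.  At a finite point `x` the value is `p(x)/q(x)`
(`∞` when `q(x) = 0`), and the value at `∞` is governed by the degrees of `p` and
`q` and their leading coefficients. -/
def ratAct {K : Type*} [Field K] (p q : Polynomial K)
    (A : Type*) [Field A] [Algebra K A] : P1 A → P1 A
  | some x =>
      if Polynomial.aeval x q = 0 then none
      else some (Polynomial.aeval x p / Polynomial.aeval x q)
  | none =>
      if q.natDegree < p.natDegree then none
      else if p.natDegree < q.natDegree then some 0
      else some (algebraMap K A (p.leadingCoeff / q.leadingCoeff))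

/-- The natural action of `Gal(K̄/K)` on `ℙ¹(K̄)`. -/
def galP1 {K : Type*} [Field K] (σ : Kbar K ≃ₐ[K] Kbar K) : P1 (Kbar K) → P1 (Kbar K) :=
  Option.map σ

/-- The inclusion `ℙ¹(K) ⊆ ℙ¹(K̄)`. -/
def P1K {K : Type*} [Field K] : P1 K → P1 (Kbar K) :=
  Option.map (algebraMap K (Kbar K))

/-- The set of `L`-rational points of `ℙ¹(K̄)`, for an intermediate field `L` of
`K̄/K`. -/
def P1Rat {K : Type*} [Field K] (L : IntermediateField K (Kbar K)) : Set (P1 (Kbar K)) :=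
  {β | β = none ∨ ∃ x ∈ L, β = some x}

/-- The Möbius transformation of `ℙ¹(F)` attached to `(a b; c e) ∈ PGL₂(F)`. -/
def moebius {F : Type*} [Field F] (a b c e : F) : P1 F → P1 F
  | some x => if c * x + e = 0 then none else some ((a * x + b) / (c * x + e))
  | none => if c = 0 then none else some (a / c)

/-- The normalizing constant `C_D = log(D!)/(D-1)`. -/
def Cconst (D : ℕ) : ℝ := Real.log (D.factorial : ℝ) / ((D : ℝ) - 1)

/-- The ramification multiplicity at a point `γ ∈ ℙ¹(A)` of the degree-`d` rational
map `f = p/q` with coefficients in `K ⊆ A`:  at a finite point `γ` with `f(γ) = c`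
finite it is the order of vanishing of `p - c·q` at `γ`; the cases involving `∞` are
handled using `q` and degrees.  A point is critical when this is at least `2`. -/
def multAt {K : Type*} [Field K] (p q : Polynomial K)
    (A : Type*) [Field A] [Algebra K A] (d : ℕ) : P1 A → ℕ
  | some x =>
      match ratAct p q A (some x) with
      | some c => ((p.map (algebraMap K A)) -
          Polynomial.C c * (q.map (algebraMap K A))).rootMultiplicity x
      | none => (q.map (algebraMap K A)).rootMultiplicity x
  | none =>
      match ratAct p q A none with
      | some c => d - ((p.map (algebraMap K A)) -
          Polynomial.C c * (q.map (algebraMap K A))).natDegree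
      | none => d - q.natDegree

end
/-- The dynamical `d`-th Chebyshev polynomial `T_d`, i.e. the unique degree-`d`
polynomial with `T_d(x + x⁻¹) = x^d + x^{-d}`; it equals `2·T̃_d(x/2)` where `T̃_d` is
the classical Chebyshev polynomial of the first kind. -/
noncomputable def dynCheb (K : Type*) [Field K] (d : ℕ) : Polynomial K :=
  2 * (Polynomial.Chebyshev.T K d).comp (Polynomial.C 2⁻¹ * Polynomial.X)

/-! A Möbius conjugacy `M` carries `f` to `±T_d`, and `T_d(u + u⁻¹) = u^d + u^{-d}`. Writing
`M(α) = w + w⁻¹`, every point `β` of the preimage tree up to level `n` therefore has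
`M(β) = u + u⁻¹` with `u^{d^k} = ±w^{±1}`, so all of these points are rational over
`E_n = K(a, b, c, e, η, ζ)`, where `(a b; c e)` is the matrix of `M`, `η^{dⁿ} = w` and `ζ` is a
primitive `2dⁿ`-th root of unity. An automorphism restricted to height `n` is then determined
by the images of these six generators, so `|r_n(G)| ≤ C·d^{2n}`. Since `log |r_n(G)|` grows
linearly in `n` while `log (1/ε_n) ≍ dⁿ`, the Minkowski dimension is `0`. -/

section TreeDimension

variable {V : ℕ → Type*} {d : ℕ}

def restrictHeight (n : ℕ) (σ : ∀ k, Equiv.Perm (V k)) : ∀ k : Fin (n + 1), Equiv.Perm (V k) :=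
  fun k => σ k

lemma agreeUpTo_of_restrictHeight_eq {σ τ : ∀ k, Equiv.Perm (V k)} {n : ℕ}
    (h : restrictHeight n σ = restrictHeight n τ) : AgreeUpTo n σ τ :=
  fun k hk => congrFun h ⟨k, Nat.lt_succ_of_le hk⟩

lemma treeDist_le_treeScale_of_agreeUpTo {σ τ : ∀ k, Equiv.Perm (V k)} {n : ℕ}
    (h : AgreeUpTo n σ τ) : treeDist d σ τ ≤ treeScale d n :=
  csInf_le ⟨0, by rintro _ ⟨m, -, rfl⟩; unfold treeScale; positivity⟩ ⟨n, h, rfl⟩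

lemma coverNum_le_levelCard {G : Set (∀ k, Equiv.Perm (V k))} {n : ℕ}
    (hG : (restrictHeight n '' G).Finite) : coverNum d G n ≤ levelCard G n := by
  have : Nonempty (∀ k, Equiv.Perm (V k)) := ⟨fun _ => 1⟩
  have hpick : ∀ t ∈ restrictHeight n '' G, ∃ σ ∈ G, restrictHeight n σ = t := fun _ ht => ht
  choose! pick _ hpick using hpick
  have hcover : G ⊆ ⋃ σ ∈ hG.toFinset.image pick, {τ | treeDist d σ τ ≤ treeScale d n} := by
    intro τ hτ
    have ht : restrictHeight n τ ∈ restrictHeight n '' G := ⟨τ, hτ, rfl⟩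
    refine Set.mem_biUnion (x := pick (restrictHeight n τ)) ?_ ?_
    · exact Finset.mem_image_of_mem _ (hG.mem_toFinset.2 ht)
    · exact treeDist_le_treeScale_of_agreeUpTo (agreeUpTo_of_restrictHeight_eq (hpick _ ht))
  calc coverNum d G n ≤ (hG.toFinset.image pick).card := Nat.sInf_le ⟨_, rfl, hcover⟩
    _ ≤ hG.toFinset.card := Finset.card_image_le
    _ = levelCard G n := by
      rw [← Set.ncard_eq_toFinset_card _ hG, levelCard, Nat.card_coe_set_eq]; rfl

lemma log_one_div_treeScale (d n : ℕ) :
    Real.log (1 / treeScale d n) = scaleExp d n * Real.log d.factorial := by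
  rw [treeScale, one_div, inv_inv, Real.log_pow]

lemma two_pow_mul_log_two_le_log_one_div_treeScale (hd : 2 ≤ d) (n : ℕ) :
    2 ^ n * Real.log 2 ≤ Real.log (1 / treeScale d (n + 1)) := by
  have hexp : 2 ^ n ≤ scaleExp d (n + 1) := calc
    2 ^ n ≤ d ^ n := Nat.pow_le_pow_left hd n
    _ ≤ scaleExp d (n + 1) := by rw [scaleExp, Finset.sum_range_succ]; exact Nat.le_add_left _ _
  have hfact : (2 : ℝ) ≤ d.factorial := by exact_mod_cast hd.trans (Nat.self_le_factorial d)
  rw [log_one_div_treeScale]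
  gcongr
  exact_mod_cast hexp

lemma Real.log_natCast_le_of_le_mul_pow {m C D : ℕ} (n : ℕ) (h : m ≤ C * D ^ n) :
    Real.log m ≤ Real.log (max C 1 : ℕ) + n * Real.log (max D 1 : ℕ) := by
  rcases Nat.eq_zero_or_pos m with rfl | hm
  · simp only [Nat.cast_zero, Real.log_zero]
    positivity
  rw [← Real.log_pow, ← Real.log_mul (by positivity) (by positivity)]
  refine Real.log_le_log (by exact_mod_cast hm) ?_
  exact_mod_cast h.trans
    (Nat.mul_le_mul (le_max_left C 1) (Nat.pow_le_pow_left (le_max_left D 1) n))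

lemma hasDim_zero_of_coverNum_le (hd : 2 ≤ d) {G : Set (∀ k, Equiv.Perm (V k))} (C D : ℕ)
    (hcov : ∀ n, coverNum d G n ≤ C * D ^ n) : HasDim d G 0 := by
  set A := Real.log (max C 1 : ℕ)
  set B := Real.log (max D 1 : ℕ)
  have hbound : ∀ n : ℕ, Real.log (coverNum d G (n + 1)) / Real.log (1 / treeScale d (n + 1)) ≤
      ((A + B) * (1 / 2) ^ n + B * (n * (1 / 2) ^ n)) / Real.log 2 := by
    intro n
    calc _ ≤ (A + (n + 1 : ℕ) * B) / (2 ^ n * Real.log 2) :=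
          div_le_div₀ (by positivity) (Real.log_natCast_le_of_le_mul_pow (n + 1) (hcov (n + 1)))
            (by positivity) (two_pow_mul_log_two_le_log_one_div_treeScale hd n)
      _ = _ := by rw [one_div, inv_pow]; field_simp; push_cast; ring
  have hlim : Filter.Tendsto
      (fun n : ℕ => ((A + B) * (1 / 2 : ℝ) ^ n + B * (n * (1 / 2) ^ n)) / Real.log 2)
      Filter.atTop (nhds 0) := by
    have h1 := tendsto_pow_atTop_nhds_zero_of_lt_one (r := (1 / 2 : ℝ)) (by norm_num) (by norm_num)
    have h2 := tendsto_self_mul_const_pow_of_lt_one (r := (1 / 2 : ℝ)) (by norm_num) (by norm_num)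
    simpa using ((h1.const_mul (A + B)).add (h2.const_mul B)).div_const (Real.log 2)
  have hratio := (Filter.tendsto_add_atTop_iff_nat (f := fun n : ℕ =>
      Real.log (coverNum d G n) / Real.log (1 / treeScale d n)) 1).1 <|
    tendsto_of_tendsto_of_tendsto_of_le_of_le (f := fun n : ℕ =>
      Real.log (coverNum d G (n + 1)) / Real.log (1 / treeScale d (n + 1)))
      tendsto_const_nhds hlim (fun n => by dsimp only; rw [log_one_div_treeScale]; positivity)
      hbound
  exact ⟨hratio.liminf_eq, hratio.limsup_eq⟩

end TreeDimension

section GaloisCount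

open Polynomial IntermediateField

variable {K : Type*} [Field K]

lemma AlgEquiv.eqOn_adjoin {L : Type*} [Field L] [Algebra K L] {σ τ : L ≃ₐ[K] L} {S : Set L}
    (h : Set.EqOn σ τ S) : Set.EqOn σ τ (adjoin K S) := fun y hy =>
  DFunLike.congr_fun (adjoin_algHom_ext K (φ₁ := (σ : L →ₐ[K] L).comp (adjoin K S).val)
    (φ₂ := (τ : L →ₐ[K] L).comp (adjoin K S).val) fun _ hx => h hx) ⟨y, hy⟩

lemma galP1_eq_of_eqOn {σ τ : Kbar K ≃ₐ[K] Kbar K} {E : IntermediateField K (Kbar K)}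
    (h : Set.EqOn σ τ E) {β : P1 (Kbar K)} (hβ : β ∈ P1Rat E) : galP1 σ β = galP1 τ β := by
  rcases hβ with rfl | ⟨y, hy, rfl⟩
  · rfl
  · exact congrArg some (h hy)

lemma Polynomial.ncard_pi_rootSet_le {ι : Type*} [Fintype ι] (L : Type*) [CommRing L] [IsDomain L]
    [Algebra K L] (p : ι → K[X]) :
    (Set.univ.pi fun i => (p i).rootSet L).ncard ≤ ∏ i, (p i).natDegree := by
  classical
  rw [show (Set.univ.pi fun i => (p i).rootSet L) =
      ↑(Fintype.piFinset fun i => (p i).rootSet L |>.toFinset) by simp [Fintype.coe_piFinset],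
    Set.ncard_coe_finset, Fintype.card_piFinset]
  refine Finset.prod_le_prod' fun i _ => ?_
  rw [← Set.ncard_eq_toFinset_card']
  exact ncard_rootSet_le _ _

lemma natDegree_minpoly_le_of_pow_eq {L : Type*} [Field L] [Algebra K L] {η w : L}
    (hw : IsIntegral K w) {m : ℕ} (hm : 0 < m) (h : η ^ m = w) :
    (minpoly K η).natDegree ≤ (minpoly K w).natDegree * m := by
  have hdeg : ((minpoly K w).comp (X ^ m)).natDegree = (minpoly K w).natDegree * m := by
    rw [natDegree_comp, natDegree_X_pow]
  have hne : (minpoly K w).comp (X ^ m) ≠ 0 := ne_zero_of_natDegree_gt (n := 0) <| by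
    rw [hdeg]; exact Nat.mul_pos (minpoly.natDegree_pos hw) hm
  rw [← hdeg]
  refine natDegree_le_natDegree (minpoly.degree_le_of_ne_zero K η hne ?_)
  rw [aeval_comp, map_pow, aeval_X, h, minpoly.aeval]

lemma restrictHeight_arbGal_finite_and_levelCard_le {ι : Type*} [Fintype ι] (x : ι → Kbar K)
    (L : IntermediateField K (Kbar K)) (φ : P1 (Kbar K) → P1 (Kbar K)) (α : P1 (Kbar K)) (n : ℕ)
    (hrat : ∀ k ≤ n, ∀ β : preV φ α k, (β : P1 (Kbar K)) ∈ P1Rat (adjoin K (Set.range x))) :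
    (restrictHeight n '' arbGal galP1 L φ α).Finite ∧
      levelCard (arbGal galP1 L φ α) n ≤ ∏ i, (minpoly K (x i)).natDegree := by
  set S := restrictHeight n '' arbGal galP1 L φ α
  set T := Set.univ.pi fun i => (minpoly K (x i)).rootSet (Kbar K)
  have hσ : ∀ t ∈ S, ∃ σ : Kbar K ≃ₐ[K] Kbar K,
      ∀ (k : Fin (n + 1)) (β : preV φ α k), (t k β : P1 (Kbar K)) = galP1 σ β := by
    rintro _ ⟨g, ⟨σ, -, hg⟩, rfl⟩
    exact ⟨σ, fun k => hg k⟩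
  choose! σ hσ using hσ
  have hmaps : ∀ t ∈ S, (fun i => σ t (x i)) ∈ T := fun t _ i _ =>
    (mem_rootSet.2 ⟨minpoly.ne_zero (Algebra.IsIntegral.isIntegral _),
      by rw [aeval_algEquiv, AlgHom.comp_apply, minpoly.aeval, map_zero]⟩)
  have hinj : Set.InjOn (fun t i => σ t (x i)) S := by
    intro t₁ h₁ t₂ h₂ heq
    have hE : Set.EqOn (σ t₁) (σ t₂) (adjoin K (Set.range x)) :=
      AlgEquiv.eqOn_adjoin (by rintro _ ⟨i, rfl⟩; exact congrFun heq i)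
    funext k
    refine Equiv.ext fun β => Subtype.ext ?_
    rw [hσ t₁ h₁, hσ t₂ h₂, galP1_eq_of_eqOn hE (hrat k (Nat.lt_succ_iff.1 k.2) β)]
  have hT : T.Finite := Set.Finite.pi fun i => rootSet_finite _ _
  refine ⟨Set.Finite.of_finite_image (hT.subset (Set.image_subset_iff.2 hmaps)) hinj, ?_⟩
  calc levelCard (arbGal galP1 L φ α) n = S.ncard := Nat.card_coe_set_eq S
    _ ≤ T.ncard := Set.ncard_le_ncard_of_injOn _ hmaps hinj hT
    _ ≤ _ := Polynomial.ncard_pi_rootSet_le _ _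

end GaloisCount

section Chebyshev

open Polynomial

variable {K : Type*} [Field K] {A : Type*} [Field A] [Algebra K A]

lemma dynCheb_eq_dickson (h2 : (2 : K) ≠ 0) (d : ℕ) : dynCheb K d = dickson 1 (1 : K) d := by
  let := invertibleOfNonzero h2
  rw [dickson_one_one_eq_chebyshev_T, invOf_eq_inv]
  rfl

lemma aeval_dynCheb_add_inv (h2 : (2 : K) ≠ 0) (d : ℕ) {u : A} (hu : u ≠ 0) :
    aeval (u + u⁻¹) (dynCheb K d) = u ^ d + u⁻¹ ^ d := by
  rw [dynCheb_eq_dickson h2, aeval_def, eval₂_eq_eval_map, map_dickson, map_one,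
    dickson_one_one_eval_add_inv _ _ (mul_inv_cancel₀ hu)]

lemma iterate_aeval_smul_dynCheb_add_inv (h2 : (2 : K) ≠ 0) {s : K} (hs : s ^ 2 = 1) (d k : ℕ)
    {u : A} (hu : u ≠ 0) : ∃ ε : A, ε ^ 2 = 1 ∧
      (fun z => aeval z (s • dynCheb K d))^[k] (u + u⁻¹) = ε * u ^ d ^ k + (ε * u ^ d ^ k)⁻¹ := by
  induction k with
  | zero => exact ⟨1, one_pow 2, by simp⟩
  | succ k ih =>
    obtain ⟨ε, hε, hk⟩ := ih
    set s' := algebraMap K A s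
    have hs' : s' ^ 2 = 1 := by rw [← map_pow, hs, map_one]
    have hs'inv : s'⁻¹ = s' := inv_eq_of_mul_eq_one_right (by rw [← sq, hs'])
    have hv : ε * u ^ d ^ k ≠ 0 :=
      mul_ne_zero (fun h => by simp [h] at hε) (pow_ne_zero _ hu)
    refine ⟨s' * ε ^ d, by
      rw [mul_pow, hs', one_mul, ← pow_mul, mul_comm, pow_mul, hε, one_pow], ?_⟩
    rw [Function.iterate_succ_apply', hk, map_smul, aeval_dynCheb_add_inv h2 d hv,
      Algebra.smul_def, pow_succ, pow_mul, mul_inv (s' * _), mul_inv s', hs'inv]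
    ring

lemma exists_eq_add_inv [IsAlgClosed A] (x : A) : ∃ u : A, u ≠ 0 ∧ x = u + u⁻¹ := by
  obtain ⟨u, hu⟩ := IsAlgClosed.exists_root (C 1 * X ^ 2 + C (-x) * X + C 1)
    (by rw [degree_quadratic one_ne_zero]; decide)
  have hu' : u ^ 2 - x * u + 1 = 0 := by
    simp only [IsRoot, eval_add, eval_mul, eval_C, eval_pow, eval_X] at hu
    linear_combination hu
  have hu0 : u ≠ 0 := by rintro rfl; simp at hu'
  exact ⟨u, hu0, by field_simp; linear_combination -hu'⟩

lemma eq_or_eq_inv_of_add_inv_eq {v w : A} (hv : v ≠ 0) (hw : w ≠ 0) (h : v + v⁻¹ = w + w⁻¹) :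
    v = w ∨ v = w⁻¹ := by
  have key : (v - w) * (v - w⁻¹) = 0 := by
    linear_combination v * h - mul_inv_cancel₀ hv + mul_inv_cancel₀ hw
  exact (mul_eq_zero.1 key).imp sub_eq_zero.1 sub_eq_zero.1

lemma mem_of_iterate_smul_dynCheb_eq_add_inv [IsAlgClosed A] (h2 : (2 : K) ≠ 0) {s : K}
    (hs : s ^ 2 = 1) {d n k : ℕ} (hd : 0 < d) (hk : k ≤ n) {w η ζ : A} (hw : w ≠ 0)
    (hη : η ^ d ^ n = w) (hζ : IsPrimitiveRoot ζ (2 * d ^ n)) (E : Subfield A) (hηE : η ∈ E)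
    (hζE : ζ ∈ E) {x : A} (hx : (fun z => aeval z (s • dynCheb K d))^[k] x = w + w⁻¹) :
    x ∈ E := by
  obtain ⟨u, hu, rfl⟩ := exists_eq_add_inv x
  obtain ⟨ε, hε, hiter⟩ := iterate_aeval_smul_dynCheb_add_inv h2 hs d k hu
  have hε0 : ε ≠ 0 := fun h => by simp [h] at hε
  have hεinv : ε⁻¹ = ε := inv_eq_of_mul_eq_one_right (by rw [← sq, hε])
  have hv := eq_or_eq_inv_of_add_inv_eq (mul_ne_zero hε0 (pow_ne_zero _ hu)) hw (hiter ▸ hx)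
  set h := η ^ d ^ (n - k)
  have hh : h ^ d ^ k = w := by rw [← pow_mul, ← pow_add, Nat.sub_add_cancel hk, hη]
  have hh0 : h ≠ 0 := fun h0 => hw (by rw [← hh, h0, zero_pow (by positivity)])
  obtain ⟨t, ht, hut⟩ : ∃ t : A, t ^ d ^ k = ε ∧ (u = t * h ∨ u = t * h⁻¹) := by
    rcases hv with hv | hv
    · refine ⟨u * h⁻¹, ?_, Or.inl (by field_simp)⟩
      rw [mul_pow, inv_pow, hh, ← hv, mul_inv, hεinv]
      field_simp
    · refine ⟨u * h, ?_, Or.inr (by field_simp)⟩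
      rw [mul_pow, hh, ← inv_inv w, ← hv, mul_inv, hεinv]
      field_simp
  have ht1 : t ^ (2 * d ^ n) = 1 := by
    rw [show 2 * d ^ n = d ^ k * 2 * d ^ (n - k) by
      rw [mul_comm _ 2, mul_assoc, ← pow_add, Nat.add_sub_cancel' hk], pow_mul, pow_mul, ht, hε,
      one_pow]
  have : NeZero (2 * d ^ n) := ⟨by positivity⟩
  obtain ⟨i, -, rfl⟩ := hζ.eq_pow_of_pow_eq_one ht1
  have hhE : h ∈ E := pow_mem hηE _
  have huE : u ∈ E := by
    rcases hut with rfl | rfl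
    · exact mul_mem (pow_mem hζE i) hhE
    · exact mul_mem (pow_mem hζE i) (inv_mem hhE)
  exact add_mem huE (inv_mem huE)

end Chebyshev

section Conjugacy

open Polynomial IntermediateField

variable {K : Type*} [Field K]

lemma mem_P1Rat_of_moebius_mem {E : IntermediateField K (Kbar K)} {a b c e : Kbar K}
    (hdet : a * e - b * c ≠ 0) (ha : a ∈ E) (hb : b ∈ E) (hc : c ∈ E) (he : e ∈ E)
    {β : P1 (Kbar K)} (hβ : moebius a b c e β ∈ P1Rat E) : β ∈ P1Rat E := by
  rcases β with _ | y
  · exact Or.inl rfl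
  refine Or.inr ⟨y, ?_, rfl⟩
  by_cases hden : c * y + e = 0
  · have hc0 : c ≠ 0 := by
      rintro rfl
      exact hdet (by simp only [zero_mul, zero_add] at hden; simp [hden])
    rw [show y = -e / c by field_simp; linear_combination hden]
    exact div_mem (neg_mem he) hc
  · simp only [moebius, if_neg hden] at hβ
    obtain ⟨x, hx, hxy⟩ := hβ.resolve_left (by simp)
    have hxy : a * y + b = x * (c * y + e) := by
      rw [← div_eq_iff hden]; exact Option.some_injective _ hxy
    have hac : a - x * c ≠ 0 := fun h0 =>
      hdet (by linear_combination (e + c * y) * h0 - c * hxy)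
    rw [show y = (x * e - b) / (a - x * c) by field_simp; linear_combination hxy]
    exact div_mem (sub_mem (mul_mem hx he) hb) (sub_mem ha (mul_mem hx hc))

lemma semiconj_some_ratAct_one {A : Type*} [Field A] [Algebra K A] (P : K[X]) :
    Function.Semiconj some (fun z : A => aeval z P) (ratAct P 1 A) := fun x => by
  simp [ratAct]

variable [CharZero K]

lemma mem_P1Rat_of_semiconj_dynCheb {F : P1 (Kbar K) → P1 (Kbar K)} {α : P1 (Kbar K)}
    {a b c e : Kbar K} (hdet : a * e - b * c ≠ 0) {s : K} (hs : s ^ 2 = 1) {d : ℕ} (hd : 0 < d)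
    (hconj : Function.Semiconj (moebius a b c e) F (ratAct (s • dynCheb K d) 1 (Kbar K)))
    {w : Kbar K} (hw : w ≠ 0) (hα : ∀ c₀, moebius a b c e α = some c₀ → c₀ = w + w⁻¹)
    {n : ℕ} {η ζ : Kbar K} (hη : η ^ d ^ n = w) (hζ : IsPrimitiveRoot ζ (2 * d ^ n))
    {E : IntermediateField K (Kbar K)} (ha : a ∈ E) (hb : b ∈ E) (hc : c ∈ E) (he : e ∈ E)
    (hηE : η ∈ E) (hζE : ζ ∈ E) {k : ℕ} (hk : k ≤ n) {β : P1 (Kbar K)} (hβ : F^[k] β = α) :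
    β ∈ P1Rat E := by
  refine mem_P1Rat_of_moebius_mem hdet ha hb hc he ?_
  rcases hMβ : moebius a b c e β with _ | y
  · exact Or.inl rfl
  have hiter := (hconj.iterate_right k β).symm
  rw [hβ, hMβ, ((semiconj_some_ratAct_one _).iterate_right k y).symm] at hiter
  exact Or.inr ⟨y, mem_of_iterate_smul_dynCheb_eq_add_inv two_ne_zero hs hd hk hw hη hζ
    E.toSubfield hηE hζE (hα _ hiter.symm), rfl⟩

lemma coverNum_arbGal_le_of_semiconj_dynCheb {F : P1 (Kbar K) → P1 (Kbar K)} (α : P1 (Kbar K))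
    (L : IntermediateField K (Kbar K)) {a b c e : Kbar K} (hdet : a * e - b * c ≠ 0) {s : K}
    (hs : s ^ 2 = 1) {d : ℕ} (hd : 0 < d)
    (hconj : Function.Semiconj (moebius a b c e) F (ratAct (s • dynCheb K d) 1 (Kbar K))) :
    ∃ C : ℕ, ∀ n, coverNum d (arbGal galP1 L F α) n ≤ C * (d ^ 2) ^ n := by
  obtain ⟨w, hw, hα⟩ : ∃ w : Kbar K, w ≠ 0 ∧ ∀ c₀, moebius a b c e α = some c₀ → c₀ = w + w⁻¹ := by
    rcases moebius a b c e α with _ | c₀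
    · exact ⟨1, one_ne_zero, by simp⟩
    · obtain ⟨w, hw, rfl⟩ := exists_eq_add_inv c₀
      exact ⟨w, hw, by simp⟩
  let D (z : Kbar K) := (minpoly K z).natDegree
  refine ⟨D a * D b * D c * D e * D w * 2, fun n => ?_⟩
  obtain ⟨η, hη⟩ := IsAlgClosed.exists_pow_nat_eq w (pow_pos hd n)
  have : NeZero (2 * d ^ n) := ⟨by positivity⟩
  obtain ⟨ζ, hζ⟩ := HasEnoughRootsOfUnity.exists_primitiveRoot (Kbar K) (2 * d ^ n)
  let x : Fin 6 → Kbar K := ![a, b, c, e, η, ζ]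
  have hx : ∀ i, x i ∈ adjoin K (Set.range x) := fun i => subset_adjoin K _ ⟨i, rfl⟩
  obtain ⟨hfin, hcard⟩ := restrictHeight_arbGal_finite_and_levelCard_le x L F α n
    fun k hk β => mem_P1Rat_of_semiconj_dynCheb hdet hs hd hconj hw hα hη hζ (hx 0) (hx 1)
      (hx 2) (hx 3) (hx 4) (hx 5) hk β.2
  have hint (z : Kbar K) : IsIntegral K z := Algebra.IsIntegral.isIntegral z
  calc coverNum d (arbGal galP1 L F α) n ≤ levelCard (arbGal galP1 L F α) n :=
        coverNum_le_levelCard hfin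
    _ ≤ ∏ i, D (x i) := hcard
    _ = D a * D b * D c * D e * D η * D ζ := by rw [Fin.prod_univ_six]; rfl
    _ ≤ D a * D b * D c * D e * (D w * d ^ n) * (1 * (2 * d ^ n)) := by
        gcongr
        · exact natDegree_minpoly_le_of_pow_eq (hint w) (by positivity) hη
        · have h1 : (minpoly K (1 : Kbar K)).natDegree = 1 := by
            rw [minpoly.one, ← C_1, natDegree_X_sub_C]
          simpa only [D, h1] using
            natDegree_minpoly_le_of_pow_eq (hint 1) (by positivity) hζ.pow_eq_one
    _ = D a * D b * D c * D e * D w * 2 * (d ^ 2) ^ n := by ring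

end Conjugacy

theorem arboreal_chebyshev_maps_small_general {K : Type*} [Field K] [NumberField K] {d : ℕ}
    (hd : 2 ≤ d) (p q : Polynomial K) (α : P1 K)
    (hcheb : ∃ a b c e : Kbar K, a * e - b * c ≠ 0 ∧
      ((∀ x : P1 (Kbar K), moebius a b c e (ratAct p q (Kbar K) x) =
          ratAct (dynCheb K d) 1 (Kbar K) (moebius a b c e x)) ∨
        (∀ x : P1 (Kbar K), moebius a b c e (ratAct p q (Kbar K) x) =
          ratAct (-dynCheb K d) 1 (Kbar K) (moebius a b c e x)))) :
    HasDim d (arbGal (K := K) galP1 ⊥ (ratAct p q (Kbar K)) (P1K α)) 0 := by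
  obtain ⟨a, b, c, e, hdet, hconj⟩ := hcheb
  obtain ⟨s, hs, hsemi⟩ : ∃ s : K, s ^ 2 = 1 ∧ Function.Semiconj (moebius a b c e)
      (ratAct p q (Kbar K)) (ratAct (s • dynCheb K d) 1 (Kbar K)) := by
    rcases hconj with h | h
    · exact ⟨1, one_pow 2, fun x => by simpa using h x⟩
    · exact ⟨-1, by norm_num, fun x => by simpa using h x⟩
  obtain ⟨C, hC⟩ := coverNum_arbGal_le_of_semiconj_dynCheb (P1K α) ⊥ hdet hs (by omega) hsemi
  exact hasDim_zero_of_coverNum_le hd C (d ^ 2) hC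

theorem arboreal_chebyshev_maps_small {K : Type*} [Field K] [NumberField K] {d : ℕ}
    (hd : 2 ≤ d) (p q : Polynomial K) (hf : IsCoprime p q)
    (hdeg : max p.natDegree q.natDegree = d) (α : P1 K)
    (hcheb : ∃ a b c e : Kbar K, a * e - b * c ≠ 0 ∧
      ((∀ x : P1 (Kbar K), moebius a b c e (ratAct p q (Kbar K) x) =
          ratAct (dynCheb K d) 1 (Kbar K) (moebius a b c e x)) ∨
        (∀ x : P1 (Kbar K), moebius a b c e (ratAct p q (Kbar K) x) =
          ratAct (-dynCheb K d) 1 (Kbar K) (moebius a b c e x)))) :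
    HasDim d (arbGal (K := K) galP1 ⊥ (ratAct p q (Kbar K)) (P1K α)) 0 :=
  arboreal_chebyshev_maps_small_general hd p q α hcheb
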